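/- arXiv:1608.06067 — 2 statements merged into one kernel-verified Lean document; each statement's English description precedes it below -/
import Mathlib

section
/- (Lemma 2) Fix ε > 0, α > 2 and c > 0. Then lim_{R→∞} R²·F_ε(c,R) = (c/π)·(∫_{ℝ²} g_ε(x) dx)² = (4cπ³/α²)·ε^{(4−2α)/α}·(csc(2π/α))². Equivalently, F_ε(c,R) = (4cπ³/α²)·ε^{(4−2α)/α}·(csc(2π/α))²·(1/R²) + o(1/R²) as R → ∞. -/
open MeasureTheory Real Filter

/-- The lens-area function `A_R(r)`. -/
noncomputable def lensArea (R r : ℝ) : ℝ :=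
  if r ≤ 2 * R then 2 * R ^ 2 * Real.arccos (r / (2 * R)) - r * Real.sqrt (R ^ 2 - r ^ 2 / 4)
  else 0

/-- The regularized path-loss function `g_ε(x) = 1/(ε + |x|^α)` on `ℝ²`. -/
noncomputable def gE (ε α : ℝ) (x : EuclideanSpace ℝ (Fin 2)) : ℝ :=
  1 / (ε + ‖x‖ ^ α)

/-- The quantity `F_ε(c, R)`. -/
noncomputable def Feps (ε α c R : ℝ) : ℝ :=
  (c / (π ^ 2 * R ^ 4)) *
    ∫ x : EuclideanSpace ℝ (Fin 2), ∫ y : EuclideanSpace ℝ (Fin 2),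
      gE ε α x * gE ε α y * lensArea R ‖x - y‖

/-!
For fixed `r`, the lens `A_R(r)` of two radius-`R` discs at distance `r` satisfies
`A_R(r) / R² → π`, and `0 ≤ A_R ≤ π R²`; dominated convergence against the integrable kernel
`g_ε(x) g_ε(y)` gives `R² F_ε(c, R) → (c / π) (∫ g_ε)²`. In polar coordinates
`∫ g_ε = 2π ∫₀^∞ r / (ε + r^α) dr`, and the substitutions `r = (ε t)^(1/α)`, `t = u / (1 - u)`
turn this into the beta integral `B(2/α, 1 - 2/α) = π / sin (2π/α)`.
-/

open Set

theorem integral_Ioo_rpow_mul_one_sub_rpow_neg {s : ℝ} (hs₀ : 0 < s) (hs₁ : s < 1) :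
    ∫ u in Ioo (0 : ℝ) 1, u ^ (s - 1) * (1 - u) ^ (-s) = π / sin (π * s) := by
  have hbeta : Complex.betaIntegral s (1 - s) = ((π / sin (π * s) : ℝ) : ℂ) := by
    rw [Complex.betaIntegral_eq_Gamma_mul_div _ _ (by simpa) (by simpa [sub_pos]),
      add_sub_cancel, Complex.Gamma_one, div_one, Complex.Gamma_mul_Gamma_one_sub]
    push_cast
    rfl
  have hreal : Complex.betaIntegral s (1 - s)
      = ((∫ u in (0 : ℝ)..1, u ^ (s - 1) * (1 - u) ^ (-s) : ℝ) : ℂ) := by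
    rw [Complex.betaIntegral, ← intervalIntegral.integral_ofReal]
    refine intervalIntegral.integral_congr fun u hu => ?_
    rw [uIcc_of_le zero_le_one] at hu
    push_cast
    rw [Complex.ofReal_cpow hu.1, Complex.ofReal_cpow (sub_nonneg.2 hu.2)]
    push_cast
    ring_nf
  rw [← integral_Ioc_eq_integral_Ioo, ← intervalIntegral.integral_of_le zero_le_one]
  exact_mod_cast hreal.symm.trans hbeta

theorem integral_Ioi_rpow_div_one_add {s : ℝ} (hs₀ : 0 < s) (hs₁ : s < 1) :
    ∫ t in Ioi (0 : ℝ), t ^ (s - 1) / (1 + t) = π / sin (π * s) := by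
  have hderiv : ∀ u ∈ Ioo (0 : ℝ) 1,
      HasDerivWithinAt (fun u => u / (1 - u)) ((1 - u) ^ 2)⁻¹ (Ioo 0 1) u := by
    intro u hu
    have h : (1 : ℝ) - u ≠ 0 := (sub_pos.2 hu.2).ne'
    have hd : HasDerivAt (fun u : ℝ => u / (1 - u)) ((1 * (1 - u) - u * -1) / (1 - u) ^ 2) u :=
      (hasDerivAt_id' u).div ((hasDerivAt_id' u).const_sub 1) h
    rw [show (1 * (1 - u) - u * -1) / (1 - u) ^ 2 = ((1 - u) ^ 2)⁻¹ by field_simp; ring] at hd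
    exact hd.hasDerivWithinAt
  have hinj : InjOn (fun u : ℝ => u / (1 - u)) (Ioo 0 1) := by
    intro a ha b hb hab
    have := (sub_pos.2 ha.2).ne'
    have := (sub_pos.2 hb.2).ne'
    field_simp at hab
    linarith
  have himage : (fun u : ℝ => u / (1 - u)) '' Ioo 0 1 = Ioi 0 := by
    ext t
    constructor
    · rintro ⟨u, hu, rfl⟩
      exact div_pos hu.1 (sub_pos.2 hu.2)
    · intro (ht : 0 < t)
      refine ⟨t / (1 + t), ⟨by positivity, (div_lt_one (by positivity)).2 (by linarith)⟩, ?_⟩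
      field_simp
      ring_nf
  rw [← himage, integral_image_eq_integral_abs_deriv_smul measurableSet_Ioo hderiv hinj,
    ← integral_Ioo_rpow_mul_one_sub_rpow_neg hs₀ hs₁]
  refine setIntegral_congr_fun measurableSet_Ioo fun u hu => ?_
  have h1u : 0 < 1 - u := sub_pos.2 hu.2
  rw [smul_eq_mul, abs_of_pos (by positivity), div_rpow hu.1.le h1u.le, rpow_neg h1u.le,
    rpow_sub_one h1u.ne']
  field_simp
  ring

theorem integral_Ioi_rpow_div_add {ε σ : ℝ} (hε : 0 < ε) (hσ₀ : 0 < σ) (hσ₁ : σ < 1) :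
    ∫ y in Ioi (0 : ℝ), y ^ (σ - 1) / (ε + y) = ε ^ (σ - 1) * (π / sin (π * σ)) := by
  have hscale := integral_comp_mul_left_Ioi (fun y => y ^ (σ - 1) / (ε + y)) 0 hε
  rw [mul_zero, smul_eq_mul] at hscale
  have hcongr : EqOn (fun x => (ε * x) ^ (σ - 1) / (ε + ε * x))
      (fun x => ε ^ (σ - 1) / ε * (x ^ (σ - 1) / (1 + x))) (Ioi 0) := fun x (hx : 0 < x) => by
    dsimp only
    rw [mul_rpow hε.le hx.le]
    field_simp
  rw [setIntegral_congr_fun measurableSet_Ioi hcongr, integral_const_mul,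
    integral_Ioi_rpow_div_one_add hσ₀ hσ₁] at hscale
  rw [← mul_inv_cancel_left₀ hε.ne' (∫ y in Ioi (0 : ℝ), y ^ (σ - 1) / (ε + y)), ← hscale]
  field_simp

theorem integral_Ioi_rpow_div_add_rpow {ε α s : ℝ} (hε : 0 < ε) (hs : 0 < s) (hsα : s < α) :
    ∫ r in Ioi (0 : ℝ), r ^ (s - 1) / (ε + r ^ α)
      = ε ^ (s / α - 1) / α * (π / sin (π * (s / α))) := by
  have hα : 0 < α := hs.trans hsα
  have hsubst := integral_comp_rpow_Ioi_of_pos (g := fun y => y ^ (s / α - 1) / (ε + y)) hα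
  have hcongr : EqOn (fun x => (α * x ^ (α - 1)) • ((x ^ α) ^ (s / α - 1) / (ε + x ^ α)))
      (fun x => α * (x ^ (s - 1) / (ε + x ^ α))) (Ioi 0) := fun x (hx : 0 < x) => by
    dsimp only
    have hexp : x ^ (α - 1) * x ^ (α * (s / α - 1)) = x ^ (s - 1) := by
      rw [← rpow_add hx]
      congr 1
      field_simp
      ring
    rw [smul_eq_mul, ← rpow_mul hx.le, mul_assoc α, ← mul_div_assoc, hexp]
  rw [setIntegral_congr_fun measurableSet_Ioi hcongr, integral_const_mul,
    integral_Ioi_rpow_div_add hε (div_pos hs hα) ((div_lt_one hα).2 hsα)] at hsubst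
  rw [div_mul_eq_mul_div, eq_div_iff hα.ne', mul_comm, hsubst]

theorem integral_Ioi_pow_smul_one_div_add_rpow {ε α : ℝ} {n : ℕ} (hε : 0 < ε) (hn : 1 ≤ n)
    (hnα : (n : ℝ) < α) :
    ∫ r in Ioi (0 : ℝ), r ^ (n - 1) • (1 / (ε + r ^ α))
      = ε ^ (n / α - 1) / α * (π / sin (π * (n / α))) := by
  rw [← integral_Ioi_rpow_div_add_rpow hε (by exact_mod_cast hn) hnα]
  refine setIntegral_congr_fun measurableSet_Ioi fun r _ => ?_
  rw [smul_eq_mul, mul_one_div, ← rpow_natCast, Nat.cast_sub hn, Nat.cast_one]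

theorem integral_Ioi_pow_smul_one_div_add_rpow_pos {ε α : ℝ} {n : ℕ} (hε : 0 < ε) (hn : 1 ≤ n)
    (hnα : (n : ℝ) < α) :
    0 < ∫ r in Ioi (0 : ℝ), r ^ (n - 1) • (1 / (ε + r ^ α)) := by
  have hα : 0 < α := lt_of_le_of_lt (by positivity) hnα
  have hsin : 0 < sin (π * (n / α)) := by
    apply sin_pos_of_pos_of_lt_pi (by positivity)
    exact mul_lt_of_lt_one_right pi_pos ((div_lt_one hα).2 hnα)
  rw [integral_Ioi_pow_smul_one_div_add_rpow hε hn hnα]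
  positivity

section Radial

variable {E : Type*} [NormedAddCommGroup E] [NormedSpace ℝ E] [FiniteDimensional ℝ E]
  [Nontrivial E] [MeasurableSpace E] [BorelSpace E] (μ : Measure E) [μ.IsAddHaarMeasure]
  {ε α : ℝ}

-- A Bochner integral vanishes on non-integrable functions, so positivity gives integrability.
theorem integrable_one_div_add_norm_rpow (hε : 0 < ε) (hα : (Module.finrank ℝ E : ℝ) < α) :
    Integrable (fun x : E => 1 / (ε + ‖x‖ ^ α)) μ :=
  (integrable_fun_norm_addHaar μ (f := fun r => 1 / (ε + r ^ α))).2 <|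
    .of_integral_ne_zero (integral_Ioi_pow_smul_one_div_add_rpow_pos hε Module.finrank_pos hα).ne'

theorem integral_one_div_add_norm_rpow (hε : 0 < ε) (hα : (Module.finrank ℝ E : ℝ) < α) :
    ∫ x : E, 1 / (ε + ‖x‖ ^ α) ∂μ = Module.finrank ℝ E * μ.real (Metric.ball 0 1) *
      (ε ^ (Module.finrank ℝ E / α - 1) / α * (π / sin (π * (Module.finrank ℝ E / α)))) := by
  rw [integral_fun_norm_addHaar μ (fun r => 1 / (ε + r ^ α)),
    integral_Ioi_pow_smul_one_div_add_rpow hε Module.finrank_pos hα, nsmul_eq_mul, smul_eq_mul,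
    mul_assoc]

end Radial

theorem integral_gE {ε α : ℝ} (hε : 0 < ε) (hα : 2 < α) :
    ∫ x, gE ε α x = 2 * π ^ 2 / α * ε ^ (2 / α - 1) / sin (2 * π / α) := by
  have h := integral_one_div_add_norm_rpow (volume : Measure (EuclideanSpace ℝ (Fin 2))) hε
    (by simpa using hα)
  simp only [finrank_euclideanSpace, Fintype.card_fin, Nat.cast_ofNat, measureReal_def,
    EuclideanSpace.volume_ball_fin_two, ENNReal.ofReal_one, one_pow, one_mul,
    ENNReal.toReal_ofReal pi_pos.le] at h
  rw [show gE ε α = fun x => 1 / (ε + ‖x‖ ^ α) from rfl, h, show π * (2 / α) = 2 * π / α by ring]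
  ring

theorem lensArea_eq_of_le {R r : ℝ} (hR : 0 < R) (hr : r ≤ 2 * R) :
    lensArea R r = 2 * R ^ 2 *
      (arccos (r / (2 * R)) - r / (2 * R) * √(1 - (r / (2 * R)) ^ 2)) := by
  have hsqrt : √(R ^ 2 - r ^ 2 / 4) = R * √(1 - (r / (2 * R)) ^ 2) := by
    rw [show R ^ 2 - r ^ 2 / 4 = R ^ 2 * (1 - (r / (2 * R)) ^ 2) by field_simp; ring,
      sqrt_mul (sq_nonneg R), sqrt_sq hR.le]
  rw [lensArea, if_pos hr, hsqrt]
  field_simp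

theorem lensArea_nonneg {R r : ℝ} (hR : 0 < R) : 0 ≤ lensArea R r := by
  by_cases h : r ≤ 2 * R
  · rw [lensArea_eq_of_le hR h]
    set u := r / (2 * R)
    have hu₁ : u ≤ 1 := (div_le_one (by positivity)).2 h
    have key : u * √(1 - u ^ 2) ≤ arccos u :=
      calc u * √(1 - u ^ 2) ≤ √(1 - u ^ 2) := mul_le_of_le_one_left (sqrt_nonneg _) hu₁
        _ = sin (arccos u) := (sin_arccos u).symm
        _ ≤ arccos u := sin_le (arccos_nonneg u)
    have := sub_nonneg.2 key
    positivity
  · rw [lensArea, if_neg h]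

theorem lensArea_le {R r : ℝ} (hr : 0 ≤ r) : lensArea R r ≤ π * R ^ 2 := by
  unfold lensArea
  split_ifs with h
  · have : arccos (r / (2 * R)) ≤ π / 2 := arccos_le_pi_div_two.2 (div_nonneg hr (by linarith))
    nlinarith [mul_nonneg hr (sqrt_nonneg (R ^ 2 - r ^ 2 / 4)), sq_nonneg R]
  · positivity

theorem measurable_lensArea (R : ℝ) : Measurable (lensArea R) := by
  unfold lensArea
  exact Measurable.ite (measurableSet_le measurable_id measurable_const) (by fun_prop)
    measurable_const

theorem tendsto_lensArea_div_sq (r : ℝ) :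
    Tendsto (fun R => lensArea R r / R ^ 2) atTop (nhds π) := by
  have hu : Tendsto (fun R => r / (2 * R)) atTop (nhds 0) :=
    tendsto_const_nhds.div_atTop (tendsto_id.const_mul_atTop two_pos)
  have hcont : Continuous fun u => 2 * (arccos u - u * √(1 - u ^ 2)) := by fun_prop
  have hlim := (hcont.tendsto 0).comp hu
  rw [arccos_zero, zero_mul, sub_zero, mul_div_cancel₀ _ two_ne_zero] at hlim
  refine hlim.congr' ?_
  filter_upwards [eventually_gt_atTop 0, eventually_ge_atTop (r / 2)] with R hR hrR
  rw [Function.comp_apply, lensArea_eq_of_le hR (by linarith)]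
  field_simp

section LensKernel

variable {E : Type*} [NormedAddCommGroup E] [MeasurableSpace E] [OpensMeasurableSpace E]
  [MeasurableSub₂ E] {μ ν : Measure E} {f g : E → ℝ}

theorem measurable_lensArea_norm_sub (R : ℝ) :
    Measurable fun z : E × E => lensArea R ‖z.1 - z.2‖ :=
  (measurable_lensArea R).comp (measurable_norm.comp measurable_sub)

theorem integrable_mul_lensArea (hf : Integrable f μ) (hg : Integrable g ν) {R : ℝ}
    (hR : 0 < R) :
    Integrable (fun z : E × E => f z.1 * g z.2 * lensArea R ‖z.1 - z.2‖) (μ.prod ν) :=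
  (hf.mul_prod hg).mul_bdd (measurable_lensArea_norm_sub R).aestronglyMeasurable <|
    .of_forall fun z => by
      rw [Real.norm_of_nonneg (lensArea_nonneg hR)]
      exact lensArea_le (norm_nonneg _)

theorem tendsto_integral_mul_lensArea_div_sq [SFinite μ] [SFinite ν] (hf : Integrable f μ)
    (hg : Integrable g ν) :
    Tendsto (fun R => ∫ z, f z.1 * g z.2 * (lensArea R ‖z.1 - z.2‖ / R ^ 2) ∂μ.prod ν) atTop
      (nhds (π * ((∫ x, f x ∂μ) * ∫ y, g y ∂ν))) := by
  have hfg := hf.mul_prod hg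
  rw [← integral_prod_mul, ← integral_const_mul]
  refine tendsto_integral_filter_of_dominated_convergence (fun z => π * ‖f z.1 * g z.2‖)
    (.of_forall fun R => hfg.aestronglyMeasurable.mul
      ((measurable_lensArea_norm_sub R).div_const _).aestronglyMeasurable) ?_
    (hfg.norm.const_mul π) (.of_forall fun z => ?_)
  · filter_upwards [eventually_gt_atTop 0] with R hR
    refine .of_forall fun z => ?_
    have hk : ‖lensArea R ‖z.1 - z.2‖ / R ^ 2‖ ≤ π := by
      rw [Real.norm_of_nonneg (div_nonneg (lensArea_nonneg hR) (sq_nonneg R)),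
        div_le_iff₀ (by positivity)]
      exact lensArea_le (norm_nonneg _)
    rw [norm_mul, mul_comm π]
    exact mul_le_mul_of_nonneg_left hk (norm_nonneg _)
  · simpa only [mul_comm π] using (tendsto_lensArea_div_sq ‖z.1 - z.2‖).const_mul (f z.1 * g z.2)

end LensKernel

theorem integrable_gE {ε α : ℝ} (hε : 0 < ε) (hα : 2 < α) : Integrable (gE ε α) :=
  integrable_one_div_add_norm_rpow volume hε (by simpa using hα)

theorem sq_mul_Feps {ε α c R : ℝ} (hε : 0 < ε) (hα : 2 < α) (hR : 0 < R) :
    R ^ 2 * Feps ε α c R = c / π ^ 2 *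
      ∫ z, gE ε α z.1 * gE ε α z.2 * (lensArea R ‖z.1 - z.2‖ / R ^ 2) ∂volume.prod volume := by
  have hg := integrable_gE hε hα
  rw [Feps, integral_integral (integrable_mul_lensArea hg hg hR)]
  simp only [mul_div_assoc']
  rw [integral_div]
  field_simp

theorem stmt9_general (ε α c : ℝ) (hε : 0 < ε) (hα : 2 < α) :
    Tendsto (fun R : ℝ => R ^ 2 * Feps ε α c R) atTop
      (nhds ((c / π) * (∫ x : EuclideanSpace ℝ (Fin 2), gE ε α x) ^ 2)) ∧
    (c / π) * (∫ x : EuclideanSpace ℝ (Fin 2), gE ε α x) ^ 2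
      = (4 * c * π ^ 3 / α ^ 2) * ε ^ ((4 - 2 * α) / α) * (1 / Real.sin (2 * π / α)) ^ 2 := by
  have hg := integrable_gE hε hα
  refine ⟨?_, ?_⟩
  · have hlim := (tendsto_integral_mul_lensArea_div_sq hg hg).const_mul (c / π ^ 2)
    rw [show c / π ^ 2 * (π * ((∫ x, gE ε α x) * ∫ x, gE ε α x)) = c / π * (∫ x, gE ε α x) ^ 2 by
      field_simp] at hlim
    exact hlim.congr' <| (eventually_gt_atTop 0).mono fun R hR => (sq_mul_Feps hε hα hR).symm
  · have hε_pow : (ε ^ (2 / α - 1)) ^ 2 = ε ^ ((4 - 2 * α) / α) := by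
      rw [← rpow_natCast, ← rpow_mul hε.le]
      congr 1
      field_simp
      ring
    rw [integral_gE hε hα, div_pow, mul_pow, hε_pow]
    field_simp
    norm_num

theorem stmt9 (ε α c : ℝ) (hε : 0 < ε) (hα : 2 < α) (hc : 0 < c) :
    Tendsto (fun R : ℝ => R ^ 2 * Feps ε α c R) atTop
      (nhds ((c / π) * (∫ x : EuclideanSpace ℝ (Fin 2), gE ε α x) ^ 2)) ∧
    (c / π) * (∫ x : EuclideanSpace ℝ (Fin 2), gE ε α x) ^ 2
      = (4 * c * π ^ 3 / α ^ 2) * ε ^ ((4 - 2 * α) / α) * (1 / Real.sin (2 * π / α)) ^ 2 :=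
  stmt9_general ε α c hε hα
end

section
/- (Planar form of the exponent in Lemma 5) Let α > 2, δ = 2/α, θ > 0 and let n ≥ 1 be an integer. Then the function x ↦ 1 − (1 + θ·|x|^{−α})^{−n} is Lebesgue integrable on ℝ² and ∫_{ℝ²} (1 − (1 + θ·|x|^{−α})^{−n}) dx = π·θ^{δ}·Γ(1 − δ)·Γ(n + δ)/Γ(n). -/
/-!
In polar coordinates the integral is `2π ∫₀^∞ r (1 - (1 + θ r^{-α})^{-n}) dr`, and the substitution
`y = θ r^{-α}` turns it into `(2π/α) θ^δ ∫₀^∞ y^{-δ-1} (1 - (1 + y)^{-n}) dy`. Expanding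
`1 - (1 + y)^{-n} = ∑_{k<n} y (1 + y)^{-(k+1)}` splits the last integral into the beta integrals
`B(1 - δ, k + δ)`, and `∑_{k<n} Γ(k + δ)/Γ(k + 1) = Γ(n + δ)/(δ Γ(n))` telescopes. Integrability
travels along the same substitutions.
-/

open MeasureTheory Real Set

lemma ofReal_rpow_mul_one_sub_rpow {a b x : ℝ} (hx : x ∈ Icc (0 : ℝ) 1) :
    ((x ^ (a - 1) * (1 - x) ^ (b - 1) : ℝ) : ℂ) =
      (x : ℂ) ^ ((a : ℂ) - 1) * (1 - (x : ℂ)) ^ ((b : ℂ) - 1) := by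
  rw [Complex.ofReal_mul, Complex.ofReal_cpow hx.1, Complex.ofReal_cpow (sub_nonneg.2 hx.2)]
  push_cast
  rfl

lemma integrableOn_Ioo_rpow_mul_one_sub_rpow {a b : ℝ} (ha : 0 < a) (hb : 0 < b) :
    IntegrableOn (fun x : ℝ => x ^ (a - 1) * (1 - x) ^ (b - 1)) (Ioo 0 1) := by
  have h : IntegrableOn (fun x : ℝ => ((x : ℂ) ^ ((a : ℂ) - 1) * (1 - (x : ℂ)) ^ ((b : ℂ) - 1)).re)
      (Ioc 0 1) :=
    (Complex.betaIntegral_convergent (u := a) (v := b) (by simpa) (by simpa)).1.re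
  refine (h.mono_set Ioo_subset_Ioc_self).congr_fun (fun x hx => ?_) measurableSet_Ioo
  simp [← ofReal_rpow_mul_one_sub_rpow (Ioo_subset_Icc_self hx)]

lemma integral_Ioo_rpow_mul_one_sub_rpow {a b : ℝ} (ha : 0 < a) (hb : 0 < b) :
    ∫ x in Ioo (0 : ℝ) 1, x ^ (a - 1) * (1 - x) ^ (b - 1) =
      Gamma a * Gamma b / Gamma (a + b) := by
  have hB : Complex.betaIntegral a b =
      ((∫ x in Ioo (0 : ℝ) 1, x ^ (a - 1) * (1 - x) ^ (b - 1) : ℝ) : ℂ) := by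
    rw [← integral_Ioc_eq_integral_Ioo, ← intervalIntegral.integral_of_le zero_le_one,
      Complex.betaIntegral, ← intervalIntegral.integral_ofReal]
    refine intervalIntegral.integral_congr fun x hx => ?_
    rw [uIcc_of_le zero_le_one] at hx
    exact (ofReal_rpow_mul_one_sub_rpow hx).symm
  have h := Complex.Gamma_mul_Gamma_eq_betaIntegral (s := a) (t := b) (by simpa) (by simpa)
  rw [hB, ← Complex.ofReal_add, Complex.Gamma_ofReal, Complex.Gamma_ofReal,
    Complex.Gamma_ofReal] at h
  norm_cast at h
  rw [h, mul_div_cancel_left₀ _ (Gamma_pos_of_pos (add_pos ha hb)).ne']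

-- The substitution `t = x / (1 - x)` carries the beta integral on `(0, 1)` to `(0, ∞)`.
lemma bijOn_div_one_sub : BijOn (fun x : ℝ => x / (1 - x)) (Ioo 0 1) (Ioi 0) := by
  refine InvOn.bijOn (f' := fun t => t / (1 + t)) ⟨fun x hx => ?_, fun t ht => ?_⟩
    (fun x hx => div_pos hx.1 (sub_pos.2 hx.2)) (fun t ht => ⟨?_, ?_⟩)
  · have : 1 - x ≠ 0 := (sub_pos.2 hx.2).ne'
    field_simp
    ring
  · have : (0 : ℝ) < t := ht
    field_simp
    ring
  · have : (0 : ℝ) < t := ht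
    positivity
  · have : (0 : ℝ) < t := ht
    rw [div_lt_one (by positivity)]
    linarith

lemma hasDerivAt_div_one_sub {x : ℝ} (hx : x ≠ 1) :
    HasDerivAt (fun x : ℝ => x / (1 - x)) ((1 - x) ^ 2)⁻¹ x := by
  have h1 : 1 - x ≠ 0 := sub_ne_zero.2 hx.symm
  refine ((hasDerivAt_id' x).div ((hasDerivAt_id' x).const_sub 1) h1).congr_deriv ?_
  field_simp
  ring

lemma abs_deriv_smul_rpow_mul_one_add_rpow_div_one_sub {a b x : ℝ} (hx : x ∈ Ioo (0 : ℝ) 1) :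
    |((1 - x) ^ 2)⁻¹| • ((x / (1 - x)) ^ (a - 1) * (1 + x / (1 - x)) ^ (-(a + b))) =
      x ^ (a - 1) * (1 - x) ^ (b - 1) := by
  have hy : 0 < 1 - x := sub_pos.2 hx.2
  have h1 : 1 + x / (1 - x) = (1 - x)⁻¹ := by field_simp; ring
  rw [smul_eq_mul, h1, div_eq_mul_inv, mul_rpow hx.1.le (by positivity), inv_rpow hy.le,
    inv_rpow hy.le, abs_of_pos (by positivity), ← rpow_natCast, ← rpow_neg hy.le,
    ← rpow_neg hy.le, ← rpow_neg hy.le]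
  calc _ = x ^ (a - 1) * ((1 - x) ^ (-((2 : ℕ) : ℝ)) * (1 - x) ^ (-(a - 1)) *
        (1 - x) ^ (-(-(a + b)))) := by ring
    _ = _ := by rw [← rpow_add hy, ← rpow_add hy]; congr 2; push_cast; ring

lemma integrableOn_Ioi_rpow_mul_one_add_rpow {a b : ℝ} (ha : 0 < a) (hb : 0 < b) :
    IntegrableOn (fun t : ℝ => t ^ (a - 1) * (1 + t) ^ (-(a + b))) (Ioi 0) := by
  rw [← bijOn_div_one_sub.image_eq, integrableOn_image_iff_integrableOn_abs_deriv_smul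
    measurableSet_Ioo (fun x hx => (hasDerivAt_div_one_sub hx.2.ne).hasDerivWithinAt)
    bijOn_div_one_sub.injOn]
  exact (integrableOn_Ioo_rpow_mul_one_sub_rpow ha hb).congr_fun
    (fun x hx => (abs_deriv_smul_rpow_mul_one_add_rpow_div_one_sub hx).symm) measurableSet_Ioo

lemma integral_Ioi_rpow_mul_one_add_rpow {a b : ℝ} (ha : 0 < a) (hb : 0 < b) :
    ∫ t in Ioi (0 : ℝ), t ^ (a - 1) * (1 + t) ^ (-(a + b)) =
      Gamma a * Gamma b / Gamma (a + b) := by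
  rw [← bijOn_div_one_sub.image_eq, integral_image_eq_integral_abs_deriv_smul
    measurableSet_Ioo (fun x hx => (hasDerivAt_div_one_sub hx.2.ne).hasDerivWithinAt)
    bijOn_div_one_sub.injOn, setIntegral_congr_fun measurableSet_Ioo
    (fun x hx => abs_deriv_smul_rpow_mul_one_add_rpow_div_one_sub hx)]
  exact integral_Ioo_rpow_mul_one_sub_rpow ha hb

lemma one_sub_inv_one_add_pow_eq_sum {y : ℝ} (hy : 0 ≤ y) (n : ℕ) :
    1 - ((1 + y) ^ n)⁻¹ = ∑ k ∈ Finset.range n, y * ((1 + y) ^ (k + 1))⁻¹ := by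
  induction n with
  | zero => simp
  | succ n ih =>
    have : 0 < 1 + y := by linarith
    rw [Finset.sum_range_succ, ← ih]
    field_simp
    ring

lemma sum_Gamma_add_div_Gamma_succ {δ : ℝ} (hδ : 0 < δ) {n : ℕ} (hn : 1 ≤ n) :
    ∑ k ∈ Finset.range n, Gamma (k + δ) / Gamma (k + 1) = Gamma (n + δ) / (δ * Gamma n) := by
  induction n, hn using Nat.le_induction with
  | base =>
    simp [add_comm (1 : ℝ), Gamma_add_one hδ.ne']
    field_simp
  | succ n hn ih =>
    have hn0 : (n : ℝ) ≠ 0 := by positivity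
    rw [Finset.sum_range_succ, ih]
    push_cast
    rw [Gamma_add_one hn0, add_right_comm, Gamma_add_one (by positivity)]
    have := (Gamma_pos_of_pos (by positivity : (0 : ℝ) < n)).ne'
    field_simp

lemma integrableOn_Ioi_and_integral_rpow_mul_one_sub_inv_one_add_pow {δ : ℝ} (h0 : 0 < δ)
    (h1 : δ < 1) {n : ℕ} (hn : 1 ≤ n) :
    IntegrableOn (fun y : ℝ => y ^ (-δ - 1) * (1 - ((1 + y) ^ n)⁻¹)) (Ioi 0) ∧
      ∫ y in Ioi (0 : ℝ), y ^ (-δ - 1) * (1 - ((1 + y) ^ n)⁻¹) =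
        Gamma (1 - δ) * Gamma (n + δ) / (δ * Gamma n) := by
  set B : ℕ → ℝ → ℝ := fun k y => y ^ ((1 - δ) - 1) * (1 + y) ^ (-((1 - δ) + (k + δ)))
  have hB : ∀ y ∈ Ioi (0 : ℝ),
      ∑ k ∈ Finset.range n, B k y = y ^ (-δ - 1) * (1 - ((1 + y) ^ n)⁻¹) := by
    intro y (hy : 0 < y)
    rw [one_sub_inv_one_add_pow_eq_sum hy.le, Finset.mul_sum]
    refine Finset.sum_congr rfl fun k _ => ?_
    simp only [B]
    rw [← rpow_natCast, ← rpow_neg (by positivity), ← mul_assoc, ← rpow_add_one hy.ne']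
    congr 2 <;> push_cast <;> ring
  have hBint : ∀ k ∈ Finset.range n, IntegrableOn (B k) (Ioi 0) := fun k _ =>
    integrableOn_Ioi_rpow_mul_one_add_rpow (by linarith) (by positivity)
  refine ⟨IntegrableOn.congr_fun (integrable_finsetSum _ hBint) hB measurableSet_Ioi, ?_⟩
  rw [← setIntegral_congr_fun measurableSet_Ioi hB, integral_finsetSum _ hBint]
  have hBval : ∀ k ∈ Finset.range n,
      ∫ y in Ioi (0 : ℝ), B k y = Gamma (1 - δ) * (Gamma (k + δ) / Gamma (k + 1)) := by
    intro k _
    rw [integral_Ioi_rpow_mul_one_add_rpow (by linarith) (by positivity),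
      show 1 - δ + (k + δ) = (k : ℝ) + 1 by ring, mul_div_assoc]
  rw [Finset.sum_congr rfl hBval, ← Finset.mul_sum, sum_Gamma_add_div_Gamma_succ h0 hn,
    mul_div_assoc]

section Substitution

variable (G : ℝ → ℝ)

lemma rpow_mul_comp_const_mul_eqOn {θ : ℝ} (hθ : 0 < θ) (s : ℝ) :
    EqOn (fun y => y ^ s * G (θ * y))
      (fun y => θ ^ (-s) * ((θ * y) ^ s * G (θ * y))) (Ioi 0) := by
  intro y (hy : 0 < y)
  simp only
  rw [mul_rpow hθ.le hy.le, ← mul_assoc, ← mul_assoc, ← rpow_add hθ, neg_add_cancel, rpow_zero,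
    one_mul]

lemma integrableOn_Ioi_rpow_mul_comp_const_mul_iff {θ : ℝ} (hθ : 0 < θ) (s : ℝ) :
    IntegrableOn (fun y => y ^ s * G (θ * y)) (Ioi 0) ↔
      IntegrableOn (fun z => z ^ s * G z) (Ioi 0) := by
  rw [integrableOn_congr_fun (rpow_mul_comp_const_mul_eqOn G hθ s) measurableSet_Ioi,
    IntegrableOn, integrable_const_mul_iff (IsUnit.mk0 _ (by positivity)), ← IntegrableOn,
    integrableOn_Ioi_comp_mul_left_iff (fun z => z ^ s * G z) 0 hθ, mul_zero]

lemma integral_Ioi_rpow_mul_comp_const_mul {θ : ℝ} (hθ : 0 < θ) (s : ℝ) :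
    ∫ y in Ioi (0 : ℝ), y ^ s * G (θ * y) = θ ^ (-s - 1) * ∫ z in Ioi (0 : ℝ), z ^ s * G z := by
  rw [setIntegral_congr_fun measurableSet_Ioi (rpow_mul_comp_const_mul_eqOn G hθ s),
    integral_const_mul, integral_comp_mul_left_Ioi (fun z => z ^ s * G z) 0 hθ, mul_zero,
    smul_eq_mul, ← mul_assoc, sub_eq_add_neg, rpow_add hθ, rpow_neg_one]

lemma mul_comp_rpow_neg_eqOn {α : ℝ} (hα : α ≠ 0) :
    EqOn (fun x => x ^ (-α - 1) • (fun y => y ^ (-(2 / α) - 1) * G y) (x ^ (-α)))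
      (fun x => x * G (x ^ (-α))) (Ioi 0) := by
  intro x (hx : 0 < x)
  simp only [smul_eq_mul]
  rw [← rpow_mul hx.le, ← mul_assoc, ← rpow_add hx]
  congr 1
  convert rpow_one x using 2
  field_simp
  ring

lemma integrableOn_Ioi_mul_comp_rpow_neg_iff {α : ℝ} (hα : α ≠ 0) :
    IntegrableOn (fun x => x * G (x ^ (-α))) (Ioi 0) ↔
      IntegrableOn (fun y => y ^ (-(2 / α) - 1) * G y) (Ioi 0) := by
  rw [← integrableOn_congr_fun (mul_comp_rpow_neg_eqOn G hα) measurableSet_Ioi]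
  exact integrableOn_Ioi_comp_rpow_iff' (fun y => y ^ (-(2 / α) - 1) * G y) (neg_ne_zero.2 hα)

lemma integral_Ioi_mul_comp_rpow_neg {α : ℝ} (hα : α ≠ 0) :
    ∫ x in Ioi (0 : ℝ), x * G (x ^ (-α)) =
      |α|⁻¹ * ∫ y in Ioi (0 : ℝ), y ^ (-(2 / α) - 1) * G y := by
  rw [← integral_const_mul, ← integral_comp_rpow_Ioi
    (fun y => |α|⁻¹ * (y ^ (-(2 / α) - 1) * G y)) (neg_ne_zero.2 hα)]
  refine setIntegral_congr_fun measurableSet_Ioi fun x hx => ?_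
  have h := mul_comp_rpow_neg_eqOn G hα hx
  simp only [smul_eq_mul] at h ⊢
  rw [← h, abs_neg]
  field_simp

end Substitution

lemma integrable_fun_norm_euclideanSpace_two_iff (f : ℝ → ℝ) :
    Integrable (fun x : EuclideanSpace ℝ (Fin 2) => f ‖x‖) ↔
      IntegrableOn (fun r => r * f r) (Ioi 0) := by
  rw [integrable_fun_norm_addHaar volume]
  simp

lemma integral_fun_norm_euclideanSpace_two (f : ℝ → ℝ) :
    ∫ x : EuclideanSpace ℝ (Fin 2), f ‖x‖ = 2 * π * ∫ r in Ioi (0 : ℝ), r * f r := by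
  rw [integral_fun_norm_addHaar, measureReal_def, EuclideanSpace.volume_ball]
  norm_num [Real.sq_sqrt pi_nonneg, ENNReal.toReal_ofReal pi_nonneg]
  ring

theorem stmt18 (α θ : ℝ) (hα : 2 < α) (hθ : 0 < θ) (n : ℕ) (hn : 1 ≤ n)
    (δ : ℝ) (hδ : δ = 2 / α) :
    Integrable (fun x : EuclideanSpace ℝ (Fin 2) => 1 - ((1 + θ * ‖x‖ ^ (-α)) ^ n)⁻¹) volume ∧
    (∫ x : EuclideanSpace ℝ (Fin 2), (1 - ((1 + θ * ‖x‖ ^ (-α)) ^ n)⁻¹))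
      = π * θ ^ δ * Real.Gamma (1 - δ) * Real.Gamma (n + δ) / Real.Gamma n := by
  have hα0 : 0 < α := by linarith
  have hδ0 : 0 < δ := hδ ▸ by positivity
  have hδ1 : δ < 1 := by rw [hδ, div_lt_one hα0]; exact hα
  set G : ℝ → ℝ := fun y => 1 - ((1 + y) ^ n)⁻¹
  obtain ⟨hGint, hGval⟩ :=
    integrableOn_Ioi_and_integral_rpow_mul_one_sub_inv_one_add_pow hδ0 hδ1 hn
  subst hδ
  refine ⟨?_, ?_⟩
  · rw [integrable_fun_norm_euclideanSpace_two_iff (fun r => G (θ * r ^ (-α))),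
      integrableOn_Ioi_mul_comp_rpow_neg_iff (fun y => G (θ * y)) hα0.ne',
      integrableOn_Ioi_rpow_mul_comp_const_mul_iff G hθ]
    exact hGint
  · rw [integral_fun_norm_euclideanSpace_two (fun r => G (θ * r ^ (-α))),
      integral_Ioi_mul_comp_rpow_neg (fun y => G (θ * y)) hα0.ne',
      integral_Ioi_rpow_mul_comp_const_mul G hθ, hGval, abs_of_pos hα0, neg_sub, sub_neg_eq_add,
      add_sub_cancel_left]
    field_simp
end
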